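/- Amplitude formula: if |ψ⟩ is leaf-separable with amplitudes α_b, reference amplitude α_{b*} ≠ 0 in the class of b, and relative amplitudes γ_{u,i_u}(g_u), then α_b = e^{i·arg(α_{b*})} · c(I(b)) · Π_{u=1}^G [γ_{u,i_u}(g_u) / sqrt(Σ_{k_u} |γ_{u,i_u}(k_u)|²)], where c(I(b)) = sqrt(Σ_{b': I(b')=I(b)} |α_{b'}|²). -/
import Mathlib


private lemma amplitude_formula.aux (a q N P : ℂ) (hN : N ≠ 0) (hP : P ≠ 0) :
    (a / N) * (N * P) * (q / P) = a * q := by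
  field_simp

/-- Amplitude formula: for leaf-separable amplitudes with reference `b*`,
`α_b = e^{i·arg(α_{b*})} · c(I) · Π_u (γ_u(g_u) / sqrt(Σ_k |γ_u(k)|²))`. -/
theorem amplitude_formula {G : ℕ} {S : Fin G → Type*} [∀ u, Fintype (S u)]
    [∀ u, DecidableEq (S u)]
    (α : ((u : Fin G) → S u) → ℂ) (bstar : (u : Fin G) → S u)
    (hbstar : α bstar ≠ 0)
    (γ : (u : Fin G) → S u → ℂ)
    (hγ : ∀ u g, γ u g = α (Function.update bstar u g) / α bstar)
    (hsep : ∀ b : (u : Fin G) → S u, α b / α bstar = ∏ u, γ u (b u))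
    (c : ℝ) (hc : c = Real.sqrt (∑ b, ‖α b‖ ^ 2)) :
    ∀ b : (u : Fin G) → S u,
      α b = (α bstar / (‖α bstar‖ : ℂ)) * (c : ℂ) *
        ∏ u, (γ u (b u) / (Real.sqrt (∑ k, ‖γ u k‖ ^ 2) : ℝ)) := by
  intro b
  set s : Fin G → ℝ := fun u => ∑ k, ‖γ u k‖ ^ 2 with hs
  -- each α b = α bstar * ∏ γ
  have hαb : ∀ b' : (u : Fin G) → S u, α b' = α bstar * ∏ u, γ u (b' u) := by
    intro b'
    have := hsep b'
    field_simp at this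
    linear_combination this
  -- s u ≥ 1 since γ u (bstar u) = 1
  have hγ1 : ∀ u, γ u (bstar u) = 1 := by
    intro u
    rw [hγ, Function.update_eq_self, div_self hbstar]
  have hs_pos : ∀ u, 0 < s u := by
    intro u
    have h1 : (1 : ℝ) ≤ s u := by
      have : ‖γ u (bstar u)‖ ^ 2 = 1 := by rw [hγ1]; simp
      calc (1 : ℝ) = ‖γ u (bstar u)‖ ^ 2 := this.symm
        _ ≤ s u := Finset.single_le_sum (f := fun k => ‖γ u k‖ ^ 2)
          (fun k _ => by positivity) (Finset.mem_univ _)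
    linarith
  have hs_nonneg : ∀ u, 0 ≤ s u := fun u => (hs_pos u).le
  -- sum of squares factorizes
  have hsum : (∑ b', ‖α b'‖ ^ 2) = ‖α bstar‖ ^ 2 * ∏ u, s u := by
    have h1 : (∑ b' : (u : Fin G) → S u, ‖α b'‖ ^ 2)
        = ∑ b' : (u : Fin G) → S u, ‖α bstar‖ ^ 2 * ∏ u, ‖γ u (b' u)‖ ^ 2 := by
      apply Finset.sum_congr rfl
      intro b' _
      rw [hαb b', norm_mul, mul_pow, norm_prod]
      rw [← Finset.prod_pow]
    rw [h1, ← Finset.mul_sum]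
    congr 1
    rw [hs]
    rw [Finset.prod_univ_sum, Fintype.piFinset_univ]
  -- c = ‖α bstar‖ * ∏ sqrt (s u)
  have hprod_sqrt : Real.sqrt (∏ u, s u) = ∏ u, Real.sqrt (s u) := by
    have h2 : (∏ u, Real.sqrt (s u)) ^ 2 = ∏ u, s u := by
      rw [← Finset.prod_pow]
      exact Finset.prod_congr rfl fun u _ => Real.sq_sqrt (hs_nonneg u)
    rw [← h2, Real.sqrt_sq (Finset.prod_nonneg fun u _ => Real.sqrt_nonneg _)]
  have hcval : c = ‖α bstar‖ * ∏ u, Real.sqrt (s u) := by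
    rw [hc, hsum, Real.sqrt_mul (by positivity), Real.sqrt_sq (norm_nonneg _), hprod_sqrt]
  -- finish
  have hnorm_ne : (‖α bstar‖ : ℂ) ≠ 0 := by
    simpa using norm_ne_zero_iff.mpr hbstar
  have hsqrt_ne : ∀ u, (Real.sqrt (s u) : ℂ) ≠ 0 := by
    intro u
    simpa using (Real.sqrt_pos.mpr (hs_pos u)).ne'
  have hP : (∏ u, (Real.sqrt (s u) : ℂ)) ≠ 0 :=
    Finset.prod_ne_zero_iff.mpr fun u _ => hsqrt_ne u
  have hrw : ∀ u : Fin G, (∑ k, ‖γ u k‖ ^ 2) = s u := fun u => rfl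
  simp only [hrw]
  rw [hαb b, hcval]
  push_cast
  rw [Finset.prod_div_distrib]
  exact (amplitude_formula.aux (α bstar) (∏ u, γ u (b u)) _ _ hnorm_ne hP).symm
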